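/- For k ≥ 2 and 1 ≤ j ≤ k−1, setting q_j = η(2j)η(2k−2j)/η(2k) and δ_j = η(2j) − q_j where η(s) = (1 − 2^(1−s))ζ(s) (with η(0) = 1/2 via B₀ conventions as needed, or restricting to j ≥ 1), one has 0 < δ_j < 2^(1−2k+2j). -/

import Mathlib

noncomputable def zetaR (n : ℕ) : ℝ := ∑' m : ℕ, (1 : ℝ) / (m + 1) ^ n

noncomputable def etaR (n : ℕ) : ℝ := (1 - (2 : ℝ) ^ ((1 : ℤ) - (n : ℤ))) * zetaR n

/-!
Write `δ = η(2j) · (η(2k) - η(n)) / η(2k)` with `n = 2k - 2j`. Each `η(s) = ∑ (-1)^m (m+1)^(-s)`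
is an alternating series with decreasing terms, so `1 - 2^(-s) ≤ η(s) ≤ 1`. The difference
`η(N) - η(n) = ∑ (-1)^m ((m+2)^(-n) - (m+2)^(-N))` is again such a series, because
`x ↦ x^n - x^N` increases on `[0, 1/2]`; hence `0 < η(N) - η(n) ≤ 2^(-n) - 2^(-N)`, and
`0 < δ ≤ (2^(-n) - 2^(-N)) / (1 - 2^(-N)) ≤ 2^(-n)`.
-/

open Set

section Alternating

variable {E : Type*} [Ring E] [UniformSpace E] [IsUniformAddGroup E] [CompleteSpace E]
  {f : ℕ → E}

theorem Summable.tsum_alternating_eq_tsum_sub [T2Space E] (hf : Summable f) :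
    ∑' m, (-1) ^ m * f m = ∑' m, f m - 2 * ∑' m, f (2 * m + 1) := by
  have heven : Summable fun m => f (2 * m) := hf.comp_injective fun a b h => by simpa using h
  have hodd : Summable fun m => f (2 * m + 1) := hf.comp_injective fun a b h => by simpa using h
  have h_even (k : ℕ) : (-1 : E) ^ (2 * k) * f (2 * k) = f (2 * k) := by simp [pow_mul]
  have h_odd (k : ℕ) : (-1 : E) ^ (2 * k + 1) * f (2 * k + 1) = -f (2 * k + 1) := by
    simp [pow_succ, pow_mul]
  rw [← tsum_even_add_odd heven hodd, ← tsum_even_add_odd (f := fun m => (-1) ^ m * f m)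
    (heven.congr fun k => (h_even k).symm) (hodd.neg.congr fun k => (h_odd k).symm)]
  simp only [h_even, h_odd, tsum_neg]
  rw [two_mul]
  abel

variable [PartialOrder E] [IsOrderedRing E] [OrderClosedTopology E]

theorem Antitone.sub_le_tsum_alternating (hfa : Antitone f) (hfs : Summable f) :
    f 0 - f 1 ≤ ∑' i, (-1) ^ i * f i := by
  simpa [Finset.sum_range_succ, sub_eq_add_neg] using
    hfa.alternating_series_le_tendsto hfs.tendsto_alternating_series_tsum 1

theorem Antitone.tsum_alternating_le (hfa : Antitone f) (hfs : Summable f) :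
    ∑' i, (-1) ^ i * f i ≤ f 0 := by
  simpa using hfa.tendsto_le_alternating_series hfs.tendsto_alternating_series_tsum 0

end Alternating

theorem strictMonoOn_pow_sub_pow {n N : ℕ} (hn : 1 ≤ n) (hnN : n < N) :
    StrictMonoOn (fun x : ℝ => x ^ n - x ^ N) (Icc 0 2⁻¹) := by
  obtain ⟨m, rfl⟩ := Nat.exists_eq_add_of_le' hn
  obtain ⟨d, rfl⟩ := Nat.exists_eq_add_of_lt hnN
  refine strictMonoOn_of_deriv_pos (convex_Icc _ _) (by fun_prop) fun x hx => ?_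
  rw [interior_Icc] at hx
  obtain ⟨hx0, hx1⟩ := hx
  have hderiv : deriv (fun x : ℝ => x ^ (m + 1) - x ^ (m + 1 + d + 1)) x
      = (m + 1) * x ^ m - (m + 1 + d + 1) * x ^ (m + 1 + d) := by
    simp
  have hcoeff : (m + 1 + d + 1 : ℝ) ≤ (m + 1) * 2 ^ (d + 1) := by
    have : (d + 2 : ℝ) ≤ 2 ^ (d + 1) := by exact_mod_cast Nat.lt_two_pow_self (n := d + 1)
    nlinarith
  have hsmall : (2 * x) ^ (d + 1) < 1 := pow_lt_one₀ (by positivity) (by linarith) (by omega)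
  have key : (m + 1 + d + 1 : ℝ) * x ^ (d + 1) < m + 1 :=
    calc (m + 1 + d + 1 : ℝ) * x ^ (d + 1) ≤ (m + 1) * 2 ^ (d + 1) * x ^ (d + 1) := by gcongr
      _ = (m + 1) * (2 * x) ^ (d + 1) := by ring
      _ < m + 1 := by nlinarith
  rw [hderiv, sub_pos]
  calc (m + 1 + d + 1 : ℝ) * x ^ (m + 1 + d) = (m + 1 + d + 1) * x ^ (d + 1) * x ^ m := by ring
    _ < (m + 1) * x ^ m := by gcongr

theorem summable_inv_add_one_pow {s : ℕ} (hs : 2 ≤ s) :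
    Summable fun m : ℕ => ((m : ℝ) + 1)⁻¹ ^ s := by
  have h := (summable_nat_add_iff 1).mpr (Real.summable_nat_pow_inv.mpr (by omega : 1 < s))
  exact h.congr fun m => by push_cast; rw [inv_pow]

theorem antitone_inv_add_one_pow (s : ℕ) : Antitone fun m : ℕ => ((m : ℝ) + 1)⁻¹ ^ s :=
  fun a b hab => pow_le_pow_left₀ (by positivity)
    (inv_anti₀ (by positivity) (by gcongr)) s

theorem etaR_eq_tsum {s : ℕ} (hs : 2 ≤ s) :
    etaR s = ∑' m : ℕ, (-1) ^ m * ((m : ℝ) + 1)⁻¹ ^ s := by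
  have hzeta : zetaR s = ∑' m : ℕ, ((m : ℝ) + 1)⁻¹ ^ s := by simp [zetaR, inv_pow]
  have hodd : ∑' m : ℕ, (((2 * m + 1 : ℕ) : ℝ) + 1)⁻¹ ^ s = 2⁻¹ ^ s * zetaR s := by
    rw [hzeta, ← tsum_mul_left]
    refine tsum_congr fun m => ?_
    rw [← mul_pow, ← mul_inv]
    push_cast
    ring_nf
  have htwo : (2 : ℝ) ^ ((1 : ℤ) - s) = 2 * 2⁻¹ ^ s := by
    rw [zpow_sub₀ two_ne_zero, zpow_one, zpow_natCast, inv_pow, div_eq_mul_inv]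
  rw [(summable_inv_add_one_pow hs).tsum_alternating_eq_tsum_sub, hodd, ← hzeta, etaR, htwo]
  ring

theorem one_sub_inv_two_pow_le_etaR {s : ℕ} (hs : 2 ≤ s) : 1 - 2⁻¹ ^ s ≤ etaR s := by
  have h := (antitone_inv_add_one_pow s).sub_le_tsum_alternating (summable_inv_add_one_pow hs)
  simp only [Nat.cast_zero, Nat.cast_one, zero_add, inv_one, one_pow, one_add_one_eq_two] at h
  rwa [etaR_eq_tsum hs]

theorem etaR_le_one {s : ℕ} (hs : 2 ≤ s) : etaR s ≤ 1 := by
  have h := (antitone_inv_add_one_pow s).tsum_alternating_le (summable_inv_add_one_pow hs)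
  simp only [Nat.cast_zero, zero_add, inv_one, one_pow] at h
  rwa [etaR_eq_tsum hs]

theorem etaR_pos {s : ℕ} (hs : 2 ≤ s) : 0 < etaR s := by
  have h : (2⁻¹ : ℝ) ^ s < 1 := pow_lt_one₀ (by norm_num) (by norm_num) (by omega)
  linarith [one_sub_inv_two_pow_le_etaR hs]

section Difference

variable {n N : ℕ}

theorem strictAnti_inv_add_two_pow_sub_pow (hn : 1 ≤ n) (hnN : n < N) :
    StrictAnti fun m : ℕ => ((m : ℝ) + 2)⁻¹ ^ n - ((m : ℝ) + 2)⁻¹ ^ N := by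
  have hmem (m : ℕ) : ((m : ℝ) + 2)⁻¹ ∈ Icc 0 2⁻¹ :=
    ⟨by positivity, inv_anti₀ (by norm_num) (by simp)⟩
  exact fun a b hab => strictMonoOn_pow_sub_pow hn hnN (hmem b) (hmem a)
    (inv_strictAnti₀ (by positivity) (by gcongr))

theorem summable_inv_add_two_pow_sub_pow (hn : 2 ≤ n) (hN : 2 ≤ N) :
    Summable fun m : ℕ => ((m : ℝ) + 2)⁻¹ ^ n - ((m : ℝ) + 2)⁻¹ ^ N := by
  have h (s : ℕ) (hs : 2 ≤ s) : Summable fun m : ℕ => ((m : ℝ) + 2)⁻¹ ^ s :=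
    ((summable_nat_add_iff 1).mpr (summable_inv_add_one_pow hs)).congr fun m => by
      push_cast; ring_nf
  exact (h n hn).sub (h N hN)

theorem etaR_sub_etaR_eq_tsum (hn : 2 ≤ n) (hN : 2 ≤ N) :
    etaR N - etaR n =
      ∑' m : ℕ, (-1) ^ m * (((m : ℝ) + 2)⁻¹ ^ n - ((m : ℝ) + 2)⁻¹ ^ N) := by
  have hN' := (summable_inv_add_one_pow hN).alternating
  have hn' := (summable_inv_add_one_pow hn).alternating
  rw [etaR_eq_tsum hN, etaR_eq_tsum hn, ← hN'.tsum_sub hn', (hN'.sub hn').tsum_eq_zero_add]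
  simp only [Nat.cast_zero, zero_add, inv_one, one_pow, mul_one, sub_self]
  refine tsum_congr fun m => ?_
  push_cast
  ring

theorem etaR_sub_etaR_pos (hn : 2 ≤ n) (hnN : n < N) : 0 < etaR N - etaR n := by
  have hanti := strictAnti_inv_add_two_pow_sub_pow (by omega) hnN
  have h := hanti.antitone.sub_le_tsum_alternating
    (summable_inv_add_two_pow_sub_pow hn (by omega))
  rw [← etaR_sub_etaR_eq_tsum hn (by omega)] at h
  linarith [hanti zero_lt_one]

theorem etaR_sub_etaR_le (hn : 2 ≤ n) (hnN : n < N) :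
    etaR N - etaR n ≤ 2⁻¹ ^ n - 2⁻¹ ^ N := by
  have h := (strictAnti_inv_add_two_pow_sub_pow (by omega) hnN).antitone.tsum_alternating_le
    (summable_inv_add_two_pow_sub_pow hn (by omega))
  rw [← etaR_sub_etaR_eq_tsum hn (by omega)] at h
  simpa using h

theorem etaR_sub_etaR_div_etaR_le (hn : 2 ≤ n) (hnN : n < N) :
    (etaR N - etaR n) / etaR N ≤ 2⁻¹ ^ n := by
  have hN : 2 ≤ N := by omega
  rw [div_le_iff₀ (etaR_pos hN)]
  calc etaR N - etaR n ≤ 2⁻¹ ^ n - 2⁻¹ ^ N := etaR_sub_etaR_le hn hnN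
    _ ≤ 2⁻¹ ^ n * (1 - 2⁻¹ ^ N) := by
      have := mul_le_of_le_one_left (by positivity : (0 : ℝ) ≤ 2⁻¹ ^ N)
        (pow_le_one₀ (by norm_num) (by norm_num) : (2⁻¹ : ℝ) ^ n ≤ 1)
      linarith
    _ ≤ 2⁻¹ ^ n * etaR N := by gcongr; exact one_sub_inv_two_pow_le_etaR hN

end Difference

theorem stmt_19 (k j : ℕ) (hj1 : 1 ≤ j) (hj2 : j ≤ k - 1) :
    0 < etaR (2 * j) - etaR (2 * j) * etaR (2 * k - 2 * j) / etaR (2 * k) ∧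
      etaR (2 * j) - etaR (2 * j) * etaR (2 * k - 2 * j) / etaR (2 * k)
        < (2 : ℝ) ^ (1 - 2 * (k : ℤ) + 2 * (j : ℤ)) := by
  set n := 2 * k - 2 * j with hn_def
  have hn : 2 ≤ n := by omega
  have hnN : n < 2 * k := by omega
  have hj : 2 ≤ 2 * j := by omega
  have hR := etaR_pos (s := 2 * k) (by omega)
  have hδ : etaR (2 * j) - etaR (2 * j) * etaR n / etaR (2 * k)
      = etaR (2 * j) * ((etaR (2 * k) - etaR n) / etaR (2 * k)) := by
    field_simp
  have hexp : (2 : ℝ) ^ (1 - 2 * (k : ℤ) + 2 * (j : ℤ)) = 2 * 2⁻¹ ^ n := by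
    rw [show 1 - 2 * (k : ℤ) + 2 * (j : ℤ) = 1 - (n : ℤ) by omega, zpow_sub₀ two_ne_zero,
      zpow_one, zpow_natCast, inv_pow, div_eq_mul_inv]
  rw [hδ, hexp]
  have hratio_pos := div_pos (etaR_sub_etaR_pos hn hnN) hR
  constructor
  · exact mul_pos (etaR_pos hj) hratio_pos
  · calc etaR (2 * j) * ((etaR (2 * k) - etaR n) / etaR (2 * k))
        ≤ 1 * ((etaR (2 * k) - etaR n) / etaR (2 * k)) := by
          gcongr
          exact etaR_le_one hj
      _ ≤ 2⁻¹ ^ n := by rw [one_mul]; exact etaR_sub_etaR_div_etaR_le hn hnN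
      _ < 2 * 2⁻¹ ^ n := by linarith [pow_pos (by norm_num : (0 : ℝ) < 2⁻¹) n]
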